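/- Let α ∈ (0, π/2), write c = cos(α), s = sin(α), let d ≥ 0 and 0 < r ≤ 1/7. Let w_r > 0 be defined by Φ(−w_r) = 2Φ(r) − 1, and set x₀ = (d + s·w_r)/c. Let C_r = {(x,y) ∈ ℝ² : x ≥ x₀ and cx + sy ≤ d + rs}. Then γ₂(C_r) ≤ (s/√(2π)) · exp(−(d+rs)²/2) · Φ(−(w_r − r))/(w_r − r). -/

import Mathlib

open MeasureTheory Set
open scoped Pointwise RealInnerProductSpace ENNReal Classical

/-- The standard Gaussian measure on `ℝ^d`, with density `(2π)^(-d/2) exp(-‖x‖²/2)`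
with respect to Lebesgue measure. -/
noncomputable def gaussD (d : ℕ) : Measure (EuclideanSpace ℝ (Fin d)) :=
  volume.withDensity fun x =>
    ENNReal.ofReal ((2 * Real.pi) ^ (-(d : ℝ) / 2) * Real.exp (-‖x‖ ^ 2 / 2))

/-- The standard Gaussian measure on `ℝ`. -/
noncomputable def gauss1 : Measure ℝ :=
  volume.withDensity fun t =>
    ENNReal.ofReal ((2 * Real.pi) ^ (-(1 : ℝ) / 2) * Real.exp (-t ^ 2 / 2))

/-- The slice `(K - y) ∩ ℝu`, viewed as a subset of `ℝ` via the isometry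
`t ↦ t • (u / ‖u‖)`. -/
def lineSlice {n : ℕ} (K : Set (EuclideanSpace ℝ (Fin n)))
    (u y : EuclideanSpace ℝ (Fin n)) : Set ℝ :=
  {t : ℝ | y + t • (‖u‖⁻¹ • u) ∈ K}

/-- `Z_B(K, u)`: the set of `y ∈ u^⊥` such that `(K - y) ∩ ℝu` has Euclidean length
at least `2‖u‖`. -/
noncomputable def ZB {n : ℕ} (K : Set (EuclideanSpace ℝ (Fin n)))
    (u : EuclideanSpace ℝ (Fin n)) : Set (EuclideanSpace ℝ (Fin n)) :=
  {y | ⟪y, u⟫ = 0 ∧ ENNReal.ofReal (2 * ‖u‖) ≤ volume (lineSlice K u y)}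

/-- Banaszczyk's transform `K * u = (K + [-u, u]) ∩ (Z_B + ℝu)`, with `K * 0 = K`. -/
noncomputable def bTransform {n : ℕ} (K : Set (EuclideanSpace ℝ (Fin n)))
    (u : EuclideanSpace ℝ (Fin n)) : Set (EuclideanSpace ℝ (Fin n)) :=
  if u = 0 then K
  else (K + segment ℝ (-u) u) ∩ (ZB K u + Set.range fun t : ℝ => t • u)

/-- `Z_K(u)`: the set of `y ∈ u^⊥` such that `γ₁((K - y) ∩ ℝu) ≥ γ₁([-‖u‖, ‖u‖])`. -/
noncomputable def ZG {n : ℕ} (K : Set (EuclideanSpace ℝ (Fin n)))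
    (u : EuclideanSpace ℝ (Fin n)) : Set (EuclideanSpace ℝ (Fin n)) :=
  {y | ⟪y, u⟫ = 0 ∧ gauss1 (Set.Icc (-‖u‖) ‖u‖) ≤ gauss1 (lineSlice K u y)}

/-- The Gaussian Banaszczyk transform `K ∘ u = (K + [-u, u]) ∩ (Z_K(u) + ℝu)`,
with `K ∘ 0 = K`. -/
noncomputable def gTransform {n : ℕ} (K : Set (EuclideanSpace ℝ (Fin n)))
    (u : EuclideanSpace ℝ (Fin n)) : Set (EuclideanSpace ℝ (Fin n)) :=
  if u = 0 then K
  else (K + segment ℝ (-u) u) ∩ (ZG K u + Set.range fun t : ℝ => t • u)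

/-- `Φ`, the cumulative distribution function of the standard Gaussian on `ℝ`. -/
noncomputable def Phi (t : ℝ) : ℝ := (gauss1 (Set.Iic t)).toReal

/-- `Φ⁻¹ : [0,1] → ℝ ∪ {±∞}`, the (extended-real-valued) inverse of `Φ`. -/
noncomputable def PhiInv (p : ℝ) : EReal :=
  sSup ((fun t : ℝ => (t : EReal)) '' {t : ℝ | Phi t ≤ p})

/-!
Put `a = w - r`, `b = d + r sin α` and `k = cos α / sin α`, so that `cos α · x₀ - sin α · a = b`.
Over the point `x₀ + u` (`u ≥ 0`) the cone is the half-line `y ≤ -a - k u`. Everything rests on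
the tangent-line bound `φ y ≤ φ x · exp (-x (y - x))` for the standard Gaussian density. Applied
under the integral it gives `Φ (-a - k u) ≤ exp (-a k u) Φ (-a)`, and at `x₀` it gives
`φ (x₀ + u) ≤ φ x₀ · exp (-x₀ u)`; integrating over `u ≥ 0` bounds the measure of the cone by
`φ x₀ Φ (-a) / (x₀ + a k)`. Finally `φ x₀ ≤ φ b` since `0 ≤ b ≤ x₀`, and `sin α (x₀ + a k) ≥ a`.
That `a > 0` comes from `2 Φ r - 1 = Φ (-w)`: were `w ≤ r`, this would force `Φ r ≥ 2/3`,
whereas `Φ (1/7) < 1/2 + 1/(7√(2π)) < 2/3`.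
-/

open Real ProbabilityTheory

local notation "γ" => gaussianReal 0 1
local notation "φ" => gaussianPDFReal 0 1

lemma gaussianPDFReal_zero_one (x : ℝ) : φ x = (√(2 * π))⁻¹ * exp (-x ^ 2 / 2) := by
  simp [gaussianPDFReal]

lemma gauss1_eq_gaussianReal : gauss1 = γ := by
  rw [gaussianReal_of_var_ne_zero _ one_ne_zero, gauss1]
  congr with x
  rw [gaussianPDF, gaussianPDFReal_zero_one, sqrt_eq_rpow, ← rpow_neg (by positivity), neg_div]

lemma Phi_eq_gaussianReal_Iic (t : ℝ) : Phi t = (γ (Iic t)).toReal := by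
  rw [Phi, gauss1_eq_gaussianReal]

lemma Phi_neg (t : ℝ) : Phi (-t) = 1 - Phi t := by
  have hsymm : γ (Iic (-t)) = γ (Ioi t) := by
    have := nullSingletonClass_gaussianReal (μ := 0) one_ne_zero
    have hmap : (γ).map (fun x => -x) = γ := by simpa using gaussianReal_map_neg (μ := 0) (v := 1)
    rw [measure_congr Ioi_ae_eq_Ici]
    conv_lhs => rw [← hmap, Measure.map_apply measurable_neg measurableSet_Iic]
    congr 1
    ext x
    simp
  rw [Phi_eq_gaussianReal_Iic, Phi_eq_gaussianReal_Iic, hsymm, ← compl_Iic, prob_compl_eq_one_sub measurableSet_Iic,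
    ENNReal.toReal_sub_of_le prob_le_one ENNReal.one_ne_top, ENNReal.toReal_one]

lemma Phi_mono : Monotone Phi := fun _ _ h => by
  simp only [Phi_eq_gaussianReal_Iic]
  exact ENNReal.toReal_mono (measure_ne_top _ _) (measure_mono (Iic_subset_Iic.mpr h))

lemma gaussianPDFReal_le_mul_exp (x y : ℝ) : φ y ≤ φ x * exp (-(x * (y - x))) := by
  rw [gaussianPDFReal_zero_one, gaussianPDFReal_zero_one, mul_assoc, ← exp_add]
  gcongr
  nlinarith [sq_nonneg (y - x)]

lemma Phi_le_half_add {t : ℝ} (ht : 0 ≤ t) : Phi t ≤ 1 / 2 + t / √(2 * π) := by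
  have hsplit : γ (Iic t) = γ (Iic 0) + γ (Ioc 0 t) := by
    rw [← measure_union (Iic_disjoint_Ioc le_rfl) measurableSet_Ioc, Iic_union_Ioc_eq_Iic ht]
  have hbox : γ (Ioc 0 t) ≤ ENNReal.ofReal (t / √(2 * π)) := by
    calc γ (Ioc 0 t) = ∫⁻ x in Ioc 0 t, ENNReal.ofReal (φ x) := by
          rw [gaussianReal_apply _ one_ne_zero]; rfl
      _ ≤ ∫⁻ _ in Ioc 0 t, ENNReal.ofReal (φ 0) := by
          gcongr with x
          simpa using gaussianPDFReal_le_mul_exp 0 x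
      _ = ENNReal.ofReal (t / √(2 * π)) := by
          rw [setLIntegral_const, Real.volume_Ioc,
            ← ENNReal.ofReal_mul (gaussianPDFReal_nonneg _ _ _), gaussianPDFReal_zero_one]
          congr 1
          simp [div_eq_inv_mul]
  have hhalf : (γ (Iic 0)).toReal = 1 / 2 := by
    have := Phi_neg 0
    rw [neg_zero, Phi_eq_gaussianReal_Iic] at this
    linarith
  rw [Phi_eq_gaussianReal_Iic, hsplit, ENNReal.toReal_add (measure_ne_top _ _) (measure_ne_top _ _), hhalf]
  gcongr
  exact ENNReal.toReal_le_of_le_ofReal (by positivity) hbox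

lemma Phi_lt_two_thirds {t : ℝ} (ht : t ≤ 1 / 7) : Phi t < 2 / 3 := by
  have hsqrt : 6 / 7 < √(2 * π) := by
    rw [lt_sqrt (by norm_num)]
    nlinarith [pi_gt_three]
  calc Phi t ≤ Phi (1 / 7) := Phi_mono ht
    _ ≤ 1 / 2 + 1 / 7 / √(2 * π) := Phi_le_half_add (by norm_num)
    _ < 1 / 2 + 1 / 7 / (6 / 7) := by gcongr
    _ = 2 / 3 := by norm_num

lemma lt_of_Phi_neg_eq {r w : ℝ} (hr : r ≤ 1 / 7) (hw : Phi (-w) = 2 * Phi r - 1) : r < w := by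
  by_contra! hwr
  have := Phi_mono (neg_le_neg hwr)
  rw [hw, Phi_neg] at this
  linarith [Phi_lt_two_thirds hr]

lemma gaussianReal_Iic_sub_le (x : ℝ) {t : ℝ} (ht : 0 ≤ t) :
    γ (Iic (x - t)) ≤ ENNReal.ofReal (exp (x * t)) * γ (Iic x) := by
  calc γ (Iic (x - t)) = ∫⁻ z in Iic x, ENNReal.ofReal (φ (z - t)) := by
        rw [gaussianReal_apply _ one_ne_zero, ← image_sub_const_Iic,
          ← (measurePreserving_sub_right volume t).setLIntegral_comp_emb
            (measurableEmbedding_subRight t)]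
        rfl
    _ ≤ ∫⁻ z in Iic x, ENNReal.ofReal (exp (x * t)) * ENNReal.ofReal (φ z) := by
        refine setLIntegral_mono' measurableSet_Iic fun z hz => ?_
        rw [← ENNReal.ofReal_mul (by positivity)]
        gcongr
        calc φ (z - t) ≤ φ z * exp (-(z * (z - t - z))) := gaussianPDFReal_le_mul_exp z _
          _ ≤ φ z * exp (x * t) := by
            gcongr
            · exact gaussianPDFReal_nonneg _ _ _
            · nlinarith [mem_Iic.mp hz]
          _ = exp (x * t) * φ z := mul_comm _ _
    _ = ENNReal.ofReal (exp (x * t)) * γ (Iic x) := by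
        rw [lintegral_const_mul' _ _ ENNReal.ofReal_ne_top, gaussianReal_apply _ one_ne_zero]
        rfl

lemma lintegral_Ici_exp_neg_mul_sub {l : ℝ} (hl : 0 < l) (x₀ : ℝ) :
    ∫⁻ x in Ici x₀, ENNReal.ofReal (exp (-l * (x - x₀))) = ENNReal.ofReal l⁻¹ := by
  have hshift : ∫⁻ x in Ici x₀, ENNReal.ofReal (exp (-l * (x - x₀))) =
      ∫⁻ u in Ici 0, ENNReal.ofReal (exp (-l * u)) := by
    rw [← (measurePreserving_add_right volume x₀).setLIntegral_comp_preimage_emb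
      (measurableEmbedding_addRight x₀), preimage_add_const_Ici, sub_self]
    simp_rw [add_sub_cancel_right]
  rw [hshift, ← setLIntegral_congr Ioi_ae_eq_Ici, ← ofReal_integral_eq_lintegral_ofReal
    (integrableOn_exp_mul_Ioi (neg_lt_zero.mpr hl) 0) (ae_of_all _ fun _ => (exp_pos _).le),
    integral_exp_mul_Ioi (neg_lt_zero.mpr hl)]
  simp

lemma setLIntegral_Ici_exp_le_gaussianPDFReal_div {x₀ k : ℝ} (hk : 0 < x₀ + k) :
    ∫⁻ x in Ici x₀, ENNReal.ofReal (exp (-k * (x - x₀))) ∂γ ≤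
      ENNReal.ofReal (φ x₀ / (x₀ + k)) := by
  calc ∫⁻ x in Ici x₀, ENNReal.ofReal (exp (-k * (x - x₀))) ∂γ
      = ∫⁻ x in Ici x₀, ENNReal.ofReal (φ x * exp (-k * (x - x₀))) := by
        rw [gaussianReal_of_var_ne_zero _ one_ne_zero,
          setLIntegral_withDensity_eq_setLIntegral_mul _ (by fun_prop) (by fun_prop)
            measurableSet_Ici]
        simp only [Pi.mul_apply, gaussianPDF, ← ENNReal.ofReal_mul (gaussianPDFReal_nonneg _ _ _)]
    _ ≤ ∫⁻ x in Ici x₀, ENNReal.ofReal (φ x₀) * ENNReal.ofReal (exp (-(x₀ + k) * (x - x₀))) := by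
        gcongr with x
        rw [← ENNReal.ofReal_mul (gaussianPDFReal_nonneg _ _ _)]
        apply ENNReal.ofReal_le_ofReal
        calc φ x * exp (-k * (x - x₀)) ≤ φ x₀ * exp (-(x₀ * (x - x₀))) * exp (-k * (x - x₀)) := by
              gcongr; exact gaussianPDFReal_le_mul_exp x₀ x
          _ = φ x₀ * exp (-(x₀ + k) * (x - x₀)) := by rw [mul_assoc, ← exp_add]; ring_nf
    _ = ENNReal.ofReal (φ x₀ / (x₀ + k)) := by
        rw [lintegral_const_mul' _ _ ENNReal.ofReal_ne_top, lintegral_Ici_exp_neg_mul_sub hk,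
          ← ENNReal.ofReal_mul (gaussianPDFReal_nonneg _ _ _), div_eq_mul_inv]

lemma gaussianReal_prod_wedge_le {x₀ a k : ℝ} (hk : 0 ≤ k) (hlam : 0 < x₀ + a * k) :
    Measure.prod γ γ {q : ℝ × ℝ | x₀ ≤ q.1 ∧ q.2 ≤ -a - k * (q.1 - x₀)} ≤
      ENNReal.ofReal (φ x₀ / (x₀ + a * k) * Phi (-a)) := by
  set T := {q : ℝ × ℝ | x₀ ≤ q.1 ∧ q.2 ≤ -a - k * (q.1 - x₀)}
  set decay : ℝ → ℝ≥0∞ := fun x => ENNReal.ofReal (exp (-(a * k) * (x - x₀)))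
  have hT : MeasurableSet T :=
    (measurableSet_le measurable_const measurable_fst).inter
      (measurableSet_le measurable_snd (by fun_prop))
  have hslice (x : ℝ) : γ (Prod.mk x ⁻¹' T) ≤ (Ici x₀).indicator decay x * γ (Iic (-a)) := by
    by_cases hx : x₀ ≤ x
    · have hTx : Prod.mk x ⁻¹' T = Iic (-a - k * (x - x₀)) := by ext y; simp [T, hx]
      rw [hTx, indicator_of_mem (mem_Ici.mpr hx)]
      convert gaussianReal_Iic_sub_le (-a) (mul_nonneg hk (sub_nonneg.2 hx)) using 4
      ring
    · have hTx : Prod.mk x ⁻¹' T = ∅ := by ext y; simp [T, hx]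
      simp [hTx]
  calc Measure.prod γ γ T = ∫⁻ x, γ (Prod.mk x ⁻¹' T) ∂γ := Measure.prod_apply hT
    _ ≤ ∫⁻ x, (Ici x₀).indicator decay x * γ (Iic (-a)) ∂γ := lintegral_mono hslice
    _ = (∫⁻ x in Ici x₀, decay x ∂γ) * γ (Iic (-a)) := by
        rw [lintegral_mul_const' _ _ (measure_ne_top _ _), lintegral_indicator measurableSet_Ici]
    _ ≤ ENNReal.ofReal (φ x₀ / (x₀ + a * k)) * ENNReal.ofReal (Phi (-a)) := by
        rw [Phi_eq_gaussianReal_Iic, ENNReal.ofReal_toReal (measure_ne_top _ _)]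
        gcongr
        exact setLIntegral_Ici_exp_le_gaussianPDFReal_div hlam
    _ = ENNReal.ofReal (φ x₀ / (x₀ + a * k) * Phi (-a)) :=
        (ENNReal.ofReal_mul (div_nonneg (gaussianPDFReal_nonneg _ _ _) hlam.le)).symm

def prodToEuclidean : ℝ × ℝ ≃ᵐ EuclideanSpace ℝ (Fin 2) :=
  MeasurableEquiv.finTwoArrow.symm.trans (MeasurableEquiv.toLp 2 (Fin 2 → ℝ))

@[simp]
lemma prodToEuclidean_apply_zero (q : ℝ × ℝ) : prodToEuclidean q 0 = q.1 := rfl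

@[simp]
lemma prodToEuclidean_apply_one (q : ℝ × ℝ) : prodToEuclidean q 1 = q.2 := rfl

lemma measurePreserving_prodToEuclidean : MeasurePreserving prodToEuclidean :=
  (EuclideanSpace.volume_preserving_symm_measurableEquiv_toLp (Fin 2)).symm.comp
    (volume_preserving_finTwoArrow ℝ).symm

lemma gaussD_two_eq_map : gaussD 2 = (Measure.prod γ γ).map prodToEuclidean := by
  ext S hS
  have hdensity (q : ℝ × ℝ) :
      (2 * π) ^ (-((2 : ℕ) : ℝ) / 2) * exp (-‖prodToEuclidean q‖ ^ 2 / 2) = φ q.1 * φ q.2 := by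
    rw [EuclideanSpace.norm_sq_eq, Fin.sum_univ_two, gaussianPDFReal_zero_one,
      gaussianPDFReal_zero_one]
    have hinv : (2 * π) ^ (-((2 : ℕ) : ℝ) / 2) = (√(2 * π))⁻¹ * (√(2 * π))⁻¹ := by
      rw [← mul_inv, mul_self_sqrt (by positivity)]
      norm_num [rpow_neg_one]
    rw [hinv]
    simp only [prodToEuclidean_apply_zero, prodToEuclidean_apply_one, Real.norm_eq_abs, sq_abs]
    rw [mul_mul_mul_comm, ← exp_add]
    ring_nf
  rw [gaussD, withDensity_apply _ hS, MeasurableEquiv.map_apply,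
    gaussianReal_of_var_ne_zero _ one_ne_zero, prod_withDensity (by fun_prop) (by fun_prop),
    withDensity_apply _ (prodToEuclidean.measurable hS), ← Measure.volume_eq_prod,
    ← measurePreserving_prodToEuclidean.setLIntegral_comp_preimage_emb
      prodToEuclidean.measurableEmbedding]
  simp only [hdensity, gaussianPDF, ENNReal.ofReal_mul (gaussianPDFReal_nonneg _ _ _)]

lemma gaussD_two_wedge_le {c s x₀ a : ℝ} (hc : 0 ≤ c) (hs : 0 < s) (hlam : 0 < x₀ + a * (c / s)) :
    gaussD 2 {p : EuclideanSpace ℝ (Fin 2) | x₀ ≤ p 0 ∧ c * p 0 + s * p 1 ≤ c * x₀ - s * a} ≤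
      ENNReal.ofReal (φ x₀ / (x₀ + a * (c / s)) * Phi (-a)) := by
  have hwedge : prodToEuclidean ⁻¹' {p : EuclideanSpace ℝ (Fin 2) |
      x₀ ≤ p 0 ∧ c * p 0 + s * p 1 ≤ c * x₀ - s * a} =
      {q : ℝ × ℝ | x₀ ≤ q.1 ∧ q.2 ≤ -a - c / s * (q.1 - x₀)} := by
    ext q
    have hline : -a - c / s * (q.1 - x₀) = (c * x₀ - s * a - c * q.1) / s := by field_simp; ring
    simp only [mem_preimage, mem_ofPred_eq, prodToEuclidean_apply_zero, prodToEuclidean_apply_one,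
      hline, le_div_iff₀ hs]
    constructor <;> rintro ⟨h₁, h₂⟩ <;> exact ⟨h₁, by linarith⟩
  rw [gaussD_two_eq_map, MeasurableEquiv.map_apply, hwedge]
  exact gaussianReal_prod_wedge_le (div_nonneg hc hs.le) hlam

lemma gaussD_two_cone_le {c s b a : ℝ} (hc : 0 < c) (hs : 0 < s) (hcs : s ^ 2 + c ^ 2 = 1)
    (hb : 0 ≤ b) (ha : 0 < a) :
    gaussD 2 {p : EuclideanSpace ℝ (Fin 2) | (b + s * a) / c ≤ p 0 ∧ c * p 0 + s * p 1 ≤ b} ≤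
      ENNReal.ofReal (s / √(2 * π) * exp (-b ^ 2 / 2) * (Phi (-a) / a)) := by
  set x₀ := (b + s * a) / c
  have hvertex : c * x₀ = b + s * a := mul_div_cancel₀ _ hc.ne'
  have hc1 : c ≤ 1 := by nlinarith
  have hbx₀ : b ≤ x₀ := by nlinarith [mul_pos hs ha]
  have hslope : a / s ≤ x₀ + a * (c / s) := by
    have hY : a ≤ s * x₀ + a * c := by nlinarith [mul_nonneg hs.le hb]
    calc a / s ≤ (s * x₀ + a * c) / s := by gcongr
      _ = x₀ + a * (c / s) := by field_simp
  have hpdf : φ x₀ ≤ φ b :=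
    (gaussianPDFReal_le_mul_exp b x₀).trans
      (mul_le_of_le_one_right (gaussianPDFReal_nonneg _ _ _) (exp_le_one_iff.2 (by nlinarith)))
  calc gaussD 2 {p : EuclideanSpace ℝ (Fin 2) | (b + s * a) / c ≤ p 0 ∧ c * p 0 + s * p 1 ≤ b}
      = gaussD 2 {p : EuclideanSpace ℝ (Fin 2) |
          x₀ ≤ p 0 ∧ c * p 0 + s * p 1 ≤ c * x₀ - s * a} := by rw [hvertex, add_sub_cancel_right]
    _ ≤ ENNReal.ofReal (φ x₀ / (x₀ + a * (c / s)) * Phi (-a)) :=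
        gaussD_two_wedge_le hc.le hs ((div_pos ha hs).trans_le hslope)
    _ ≤ ENNReal.ofReal (φ b / (a / s) * Phi (-a)) := by
        gcongr
        exacts [ENNReal.toReal_nonneg, gaussianPDFReal_nonneg _ _ _]
    _ = ENNReal.ofReal (s / √(2 * π) * exp (-b ^ 2 / 2) * (Phi (-a) / a)) := by
        rw [gaussianPDFReal_zero_one]; field_simp

theorem cone_measure_le_general (α : ℝ) (hα : α ∈ Set.Ioo 0 (Real.pi / 2))
    (d : ℝ) (hd : 0 ≤ d) (r : ℝ) (hr0 : 0 < r) (hr : r ≤ 1 / 7)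
    (w : ℝ) (hwdef : Phi (-w) = 2 * Phi r - 1) :
    gaussD 2 {p : EuclideanSpace ℝ (Fin 2) |
        (d + Real.sin α * w) / Real.cos α ≤ p 0 ∧
        Real.cos α * p 0 + Real.sin α * p 1 ≤ d + r * Real.sin α}
      ≤ ENNReal.ofReal (Real.sin α / Real.sqrt (2 * Real.pi) *
          Real.exp (-(d + r * Real.sin α) ^ 2 / 2) *
          (Phi (-(w - r)) / (w - r))) := by
  obtain ⟨hα0, hα2⟩ := hα
  have hc : 0 < cos α := cos_pos_of_mem_Ioo ⟨by linarith [pi_pos], hα2⟩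
  have hs : 0 < sin α := sin_pos_of_pos_of_lt_pi hα0 (by linarith)
  have ha : 0 < w - r := sub_pos.2 (lt_of_Phi_neg_eq hr hwdef)
  rw [show d + sin α * w = d + r * sin α + sin α * (w - r) by ring]
  exact gaussD_two_cone_le hc hs (sin_sq_add_cos_sq α) (by positivity) ha

/-- The Gaussian measure of the cone
`C_r = {(x, y) : x ≥ x₀, x cos α + y sin α ≤ d + r sin α}` (with
`x₀ = (d + w_r sin α)/cos α`) is at most
`(sin α / √(2π)) exp(-(d + r sin α)²/2) Φ(-(w_r - r)) / (w_r - r)`. -/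
theorem cone_measure_le (α : ℝ) (hα : α ∈ Set.Ioo 0 (Real.pi / 2))
    (d : ℝ) (hd : 0 ≤ d) (r : ℝ) (hr0 : 0 < r) (hr : r ≤ 1 / 7)
    (w : ℝ) (hw : 0 < w) (hwdef : Phi (-w) = 2 * Phi r - 1) :
    gaussD 2 {p : EuclideanSpace ℝ (Fin 2) |
        (d + Real.sin α * w) / Real.cos α ≤ p 0 ∧
        Real.cos α * p 0 + Real.sin α * p 1 ≤ d + r * Real.sin α}
      ≤ ENNReal.ofReal (Real.sin α / Real.sqrt (2 * Real.pi) *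
          Real.exp (-(d + r * Real.sin α) ^ 2 / 2) *
          (Phi (-(w - r)) / (w - r))) :=
  cone_measure_le_general α hα d hd r hr0 hr w hwdef
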